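/- The sum, over all m-partitions λ of length n, of the square of the number of standard Young m-tableaux of shape λ equals n!·m^n. -/
import Mathlib


/- STATEMENT 16: The sum, over all m-partitions λ of length n, of the square of
the number of standard Young m-tableaux of shape λ equals n!·m^n. -/

/-- An `m`-partition (Young `m`-diagram) of length `n`, encoded as the finite
set of its nodes `(k, r, s)` (diagram `k`, row `r`, column `s`, all 0-based;
rows and columns of an `n`-node diagram are `< n`): it has `n` nodes and is
downward closed in rows and columns within each diagram. -/
def IsMPartition (m n : ℕ) (S : Finset (Fin m × Fin n × Fin n)) : Prop :=
  S.card = n ∧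
  ∀ (k : Fin m) (r s : Fin n), (k, r, s) ∈ S →
    ∀ r' ≤ r, ∀ s' ≤ s, (k, r', s') ∈ S

/-- A standard Young `m`-tableau with `n` nodes, encoded as the map sending the
entry `i` (0-based) to its node `(k, r, s)`: the filling is injective and, for
each node, all nodes to its left in its row and all nodes above it in its
column are occupied by smaller entries. This holds if and only if the occupied
nodes form an `m`-partition of length `n` and the entries increase along the
rows and columns of every diagram. -/
def IsStdTab (m n : ℕ) (T : Fin n → Fin m × Fin n × Fin n) : Prop :=
  Function.Injective T ∧
  ∀ i : Fin n,
    (∀ s' < (T i).2.2, ∃ j : Fin n, j < i ∧ T j = ((T i).1, (T i).2.1, s')) ∧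
    (∀ r' < (T i).2.1, ∃ j : Fin n, j < i ∧ T j = ((T i).1, r', (T i).2.2))


open Finset

namespace YD

open scoped Classical

variable (m : ℕ)

abbrev Cell (m : ℕ) := Fin m × ℕ × ℕ

/-- downward-closed (Young diagram) condition -/
def Dg (S : Finset (Cell m)) : Prop :=
  ∀ k r s, (k, r, s) ∈ S → ∀ r' ≤ r, ∀ s' ≤ s, (k, r', s') ∈ S

variable {m}

/-- a downward-closed finset of naturals is a range -/
lemma range_of_dc (T : Finset ℕ) (h : ∀ a ∈ T, ∀ b ≤ a, b ∈ T) :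
    T = Finset.range T.card := by
  have hsub : T ⊆ Finset.range T.card := by
    intro x hx
    have h1 : Finset.Iic x ⊆ T := fun b hb => h x hx b (Finset.mem_Iic.mp hb)
    have := Finset.card_le_card h1
    simp [Nat.card_Iic] at this
    simpa using Nat.lt_of_lt_of_le (Nat.lt_succ_self x) this
  exact Finset.eq_of_subset_of_card_le hsub (by simp)

variable (m) in
/-- length of row `r` of diagram `k` -/
noncomputable def len (S : Finset (Cell m)) (k : Fin m) (r : ℕ) : ℕ :=
  ((S.filter (fun c => c.1 = k ∧ c.2.1 = r)).image (fun c => c.2.2)).card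

lemma mem_image_len (S : Finset (Cell m)) (k : Fin m) (r s : ℕ) :
    s ∈ (S.filter (fun c => c.1 = k ∧ c.2.1 = r)).image (fun c => c.2.2) ↔ (k, r, s) ∈ S := by
  constructor
  · rintro h
    obtain ⟨⟨k', r', s'⟩, hc, rfl⟩ := Finset.mem_image.mp h
    obtain ⟨hmem, h1, h2⟩ := Finset.mem_filter.mp hc
    simp only at h1 h2
    subst h1; subst h2
    exact hmem
  · intro h
    exact Finset.mem_image.mpr ⟨(k, r, s), Finset.mem_filter.mpr ⟨h, rfl, rfl⟩, rfl⟩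

/-- membership characterization via row lengths -/
lemma mem_iff_lt_len {S : Finset (Cell m)} (hS : Dg m S) (k : Fin m) (r s : ℕ) :
    (k, r, s) ∈ S ↔ s < len m S k r := by
  have hdc : ∀ a ∈ (S.filter (fun c => c.1 = k ∧ c.2.1 = r)).image (fun c => c.2.2),
      ∀ b ≤ a, b ∈ (S.filter (fun c => c.1 = k ∧ c.2.1 = r)).image (fun c => c.2.2) := by
    intro a ha b hb
    rw [mem_image_len] at ha ⊢
    exact hS k r a ha r le_rfl b hb
  have := range_of_dc _ hdc
  rw [← mem_image_len S k r s, this, Finset.mem_range, len]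

lemma len_antitone {S : Finset (Cell m)} (hS : Dg m S) (k : Fin m) {r r' : ℕ} (h : r ≤ r') :
    len m S k r' ≤ len m S k r := by
  by_contra hlt
  push_neg at hlt
  have h1 : (k, r', len m S k r) ∈ S := (mem_iff_lt_len hS k r' _).mpr hlt
  have h2 := hS k r' (len m S k r) h1 r h (len m S k r) le_rfl
  rw [mem_iff_lt_len hS] at h2
  omega


variable (m) in
/-- removable cells -/
noncomputable def Rem (S : Finset (Cell m)) : Finset (Cell m) :=
  S.filter (fun c => Dg m (S.erase c))

variable (m) in
/-- addable cells (bounded region) -/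
noncomputable def AddF (S : Finset (Cell m)) : Finset (Cell m) :=
  ((Finset.univ : Finset (Fin m)) ×ˢ Finset.range (S.card + 1) ×ˢ Finset.range (S.card + 1)).filter
    (fun c => c ∉ S ∧ Dg m (insert c S))

lemma mem_Rem {S : Finset (Cell m)} {c : Cell m} :
    c ∈ Rem m S ↔ c ∈ S ∧ Dg m (S.erase c) := Finset.mem_filter

/-- coordinates of a cell of a diagram are bounded by the card -/
lemma coord_lt {S : Finset (Cell m)} (hS : Dg m S) {k : Fin m} {r s : ℕ}
    (h : (k, r, s) ∈ S) : r < S.card ∧ s < S.card := by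
  constructor
  · have hsub : (Finset.range (r + 1)).image (fun r' => ((k, r', s) : Cell m)) ⊆ S := by
      intro c hc
      obtain ⟨r', hr', rfl⟩ := Finset.mem_image.mp hc
      exact hS k r s h r' (Nat.lt_succ_iff.mp (Finset.mem_range.mp hr')) s le_rfl
    have := Finset.card_le_card hsub
    rwa [Finset.card_image_of_injective _ (fun a b hab => by simpa using hab),
      Finset.card_range, Nat.succ_le_iff] at this
  · have hsub : (Finset.range (s + 1)).image (fun s' => ((k, r, s') : Cell m)) ⊆ S := by
      intro c hc
      obtain ⟨s', hs', rfl⟩ := Finset.mem_image.mp hc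
      exact hS k r s h r le_rfl s' (Nat.lt_succ_iff.mp (Finset.mem_range.mp hs'))
    have := Finset.card_le_card hsub
    rwa [Finset.card_image_of_injective _ (fun a b hab => by simpa using hab),
      Finset.card_range, Nat.succ_le_iff] at this

lemma mem_AddF {S : Finset (Cell m)} (hS : Dg m S) {c : Cell m} :
    c ∈ AddF m S ↔ c ∉ S ∧ Dg m (insert c S) := by
  constructor
  · intro h; exact (Finset.mem_filter.mp h).2
  · rintro ⟨h1, h2⟩
    refine Finset.mem_filter.mpr ⟨?_, h1, h2⟩
    obtain ⟨k, r, s⟩ := c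
    have hc : (k, r, s) ∈ insert (k, r, s) S := Finset.mem_insert_self _ _
    have hlt := coord_lt h2 hc
    have hcard : (insert (k, r, s) S).card = S.card + 1 := Finset.card_insert_of_notMem h1
    rw [hcard] at hlt
    simp only [Finset.mem_product, Finset.mem_univ, Finset.mem_range]
    exact ⟨trivial, hlt.1, hlt.2⟩

/-- removability characterization -/
lemma rem_char {S : Finset (Cell m)} (hS : Dg m S) (k : Fin m) (r s : ℕ) :
    (k, r, s) ∈ Rem m S ↔ s + 1 = len m S k r ∧ len m S k (r + 1) < len m S k r := by
  constructor
  · rintro h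
    obtain ⟨hmem, hdg⟩ := mem_Rem.mp h
    have hs : s < len m S k r := (mem_iff_lt_len hS k r s).mp hmem
    have h1 : s + 1 = len m S k r := by
      by_contra hne
      have hlt : s + 1 < len m S k r := by omega
      have h2 : (k, r, s + 1) ∈ S := (mem_iff_lt_len hS k r _).mpr hlt
      have h3 : (k, r, s + 1) ∈ S.erase (k, r, s) :=
        Finset.mem_erase.mpr ⟨by simp, h2⟩
      have h4 := hdg k r (s + 1) h3 r le_rfl s (by omega)
      exact absurd (Finset.mem_erase.mp h4).1 (by simp)
    refine ⟨h1, ?_⟩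
    by_contra hne
    have heq : len m S k (r + 1) = len m S k r :=
      le_antisymm (len_antitone hS k (by omega)) (by omega)
    have h2 : (k, r + 1, s) ∈ S := (mem_iff_lt_len hS k (r + 1) s).mpr (by omega)
    have h3 : (k, r + 1, s) ∈ S.erase (k, r, s) := Finset.mem_erase.mpr ⟨by simp, h2⟩
    have h4 := hdg k (r + 1) s h3 r (by omega) s le_rfl
    exact absurd (Finset.mem_erase.mp h4).1 (by simp)
  · rintro ⟨h1, h2⟩
    have hmem : (k, r, s) ∈ S := (mem_iff_lt_len hS k r s).mpr (by omega)
    refine mem_Rem.mpr ⟨hmem, ?_⟩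
    rintro k' r' s' hd r'' hr'' s'' hs''
    obtain ⟨hne, hdS⟩ := Finset.mem_erase.mp hd
    have hmem2 : (k', r'', s'') ∈ S := hS k' r' s' hdS r'' hr'' s'' hs''
    refine Finset.mem_erase.mpr ⟨?_, hmem2⟩
    intro heq
    have hk : k' = k ∧ r'' = r ∧ s'' = s := by simpa [Prod.ext_iff] using heq
    obtain ⟨hk1, hk2, hk3⟩ := hk
    have hs' : s' < len m S k' r' := (mem_iff_lt_len hS k' r' s').mp hdS
    rw [hk1] at hs'
    have hlen : len m S k r' ≤ len m S k r := len_antitone hS k (by omega)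
    have hss : s' = s := by omega
    have hrr : r' ≠ r := by
      intro hrr
      apply hne
      rw [hk1, hrr, hss]
    have hrlt : r + 1 ≤ r' := by omega
    have : len m S k r' ≤ len m S k (r + 1) := len_antitone hS k hrlt
    omega

/-- addability characterization -/
lemma add_char {S : Finset (Cell m)} (hS : Dg m S) (k : Fin m) (r s : ℕ) :
    ((k, r, s) ∉ S ∧ Dg m (insert (k, r, s) S)) ↔
      s = len m S k r ∧ (r = 0 ∨ len m S k r < len m S k (r - 1)) := by
  constructor
  · rintro ⟨hnm, hdg⟩
    have hs : len m S k r ≤ s := by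
      by_contra h
      exact hnm ((mem_iff_lt_len hS k r s).mpr (by omega))
    have h1 : s = len m S k r := by
      by_contra hne
      have hlt : len m S k r < s := by omega
      have h2 : (k, r, len m S k r) ∈ insert (k, r, s) S :=
        hdg k r s (Finset.mem_insert_self _ _) r le_rfl (len m S k r) (by omega)
      rcases Finset.mem_insert.mp h2 with h3 | h3
      · rw [Prod.mk.injEq, Prod.mk.injEq] at h3; omega
      · rw [mem_iff_lt_len hS] at h3; omega
    refine ⟨h1, ?_⟩
    rcases Nat.eq_zero_or_pos r with hr | hr
    · exact Or.inl hr
    · right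
      have h2 : (k, r - 1, s) ∈ insert (k, r, s) S :=
        hdg k r s (Finset.mem_insert_self _ _) (r - 1) (by omega) s le_rfl
      rcases Finset.mem_insert.mp h2 with h3 | h3
      · rw [Prod.mk.injEq, Prod.mk.injEq] at h3; omega
      · rw [mem_iff_lt_len hS] at h3
        have := len_antitone hS k (show r - 1 ≤ r by omega)
        omega
  · rintro ⟨h1, h2⟩
    have hnm : (k, r, s) ∉ S := by
      rw [mem_iff_lt_len hS]; omega
    refine ⟨hnm, ?_⟩
    rintro k' r' s' hd r'' hr'' s'' hs''
    rcases Finset.mem_insert.mp hd with h3 | h3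
    · have hk : k' = k ∧ r' = r ∧ s' = s := by simpa [Prod.ext_iff] using h3
      obtain ⟨hk1, hk2, hk3⟩ := hk
      subst hk1 hk2 hk3
      rcases Nat.lt_or_ge s'' s' with hlt | hge
      · -- s'' < s = len r ≤ len r''
        have : len m S k' r' ≤ len m S k' r'' := len_antitone hS k' hr''
        exact Finset.mem_insert_of_mem ((mem_iff_lt_len hS k' r'' s'').mpr (by omega))
      · have hseq : s'' = s' := by omega
        subst hseq
        rcases Nat.lt_or_ge r'' r' with hlt | hge
        · -- r'' < r', so r' ≥ 1 and len r'' ≥ len (r'-1) > len r' = s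
          have hr1 : r' ≠ 0 := by omega
          have h4 : len m S k' r' < len m S k' (r' - 1) := by tauto
          have h5 : len m S k' (r' - 1) ≤ len m S k' r'' := len_antitone hS k' (by omega)
          exact Finset.mem_insert_of_mem ((mem_iff_lt_len hS k' r'' s'').mpr (by omega))
        · have : r'' = r' := by omega
          subst this
          exact Finset.mem_insert_self _ _
    · exact Finset.mem_insert_of_mem (hS k' r' s' h3 r'' hr'' s'' hs'')

lemma card_AddF {S : Finset (Cell m)} (hS : Dg m S) :
    (AddF m S).card = m + (Rem m S).card := by
  classical
  set top : Fin m → Cell m := fun k => (k, 0, len m S k 0) with htop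
  set φ : Cell m → Cell m := fun c => (c.1, c.2.1 + 1, len m S c.1 (c.2.1 + 1)) with hφ
  have hset : AddF m S = (Finset.univ.image top) ∪ ((Rem m S).image φ) := by
    ext c
    obtain ⟨k, r, s⟩ := c
    constructor
    · intro h
      have hc := (mem_AddF hS).mp h
      rw [add_char hS] at hc
      obtain ⟨hs, hr⟩ := hc
      rcases hr with hr | hr
      · apply Finset.mem_union_left
        apply Finset.mem_image.mpr
        refine ⟨k, Finset.mem_univ k, ?_⟩
        subst hr
        subst hs
        rfl
      · apply Finset.mem_union_right
        apply Finset.mem_image.mpr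
        have hr0 : r ≠ 0 := by
          intro h0
          rw [h0] at hr
          simp at hr
        refine ⟨(k, r - 1, len m S k (r - 1) - 1), ?_, ?_⟩
        · rw [rem_char hS]
          constructor
          · omega
          · have : r - 1 + 1 = r := by omega
            rw [this]
            omega
        · simp only [hφ]
          have h1 : r - 1 + 1 = r := by omega
          rw [h1, hs]
    · intro h
      rcases Finset.mem_union.mp h with h | h
      · obtain ⟨k', _, heq⟩ := Finset.mem_image.mp h
        have : k' = k ∧ 0 = r ∧ len m S k' 0 = s := by simpa [htop, Prod.ext_iff] using heq
        obtain ⟨rfl, h2, h3⟩ := this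
        rw [mem_AddF hS, add_char hS]
        exact ⟨h3.symm.trans (by rw [← h2]), Or.inl h2.symm⟩
      · obtain ⟨⟨k', r', s'⟩, hmem, heq⟩ := Finset.mem_image.mp h
        rw [rem_char hS] at hmem
        have : k' = k ∧ r' + 1 = r ∧ len m S k' (r' + 1) = s := by
          simpa [hφ, Prod.ext_iff] using heq
        obtain ⟨rfl, h2, h3⟩ := this
        rw [mem_AddF hS, add_char hS]
        refine ⟨by rw [← h2, h3], Or.inr ?_⟩
        rw [← h2]
        simp only [Nat.add_sub_cancel]
        omega
  rw [hset]
  have hdisj : Disjoint (Finset.univ.image top) ((Rem m S).image φ) := by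
    rw [Finset.disjoint_left]
    intro c hc1 hc2
    obtain ⟨k, _, heq1⟩ := Finset.mem_image.mp hc1
    obtain ⟨d, _, heq2⟩ := Finset.mem_image.mp hc2
    rw [← heq1] at heq2
    have : d.2.1 + 1 = 0 := by simpa [htop, hφ, Prod.ext_iff] using heq2
    omega
  rw [Finset.card_union_of_disjoint hdisj]
  congr 1
  · have hinj : Function.Injective top := by
      intro a b hab
      exact (Prod.ext_iff.mp hab).1
    rw [Finset.card_image_of_injective _ hinj, Finset.card_univ, Fintype.card_fin]
  · apply Finset.card_image_of_injOn
    rintro ⟨k, r, s⟩ ha ⟨k', r', s'⟩ hb hab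
    replace ha := (rem_char hS _ _ _).mp (Finset.mem_coe.mp ha)
    replace hb := (rem_char hS _ _ _).mp (Finset.mem_coe.mp hb)
    have h1 : k = k' ∧ r + 1 = r' + 1 ∧ len m S k (r + 1) = len m S k' (r' + 1) := by
      simpa [hφ, Prod.ext_iff] using hab
    obtain ⟨rfl, h2, h3⟩ := h1
    have hr : r = r' := by omega
    subst hr
    have hs : s = s' := by omega
    rw [hs]

lemma Dg_empty : Dg m (∅ : Finset (Cell m)) := by
  intro k r s h
  simp at h

/-- number of standard fillings (chains), defined by recursion on card -/
noncomputable def f (S : Finset (Cell m)) : ℕ :=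
  if S = ∅ then 1
  else ∑ c ∈ (Rem m S).attach, f (S.erase c.1)
termination_by S.card
decreasing_by
  exact Finset.card_erase_lt_of_mem (mem_Rem.mp c.2).1

lemma f_empty : f (∅ : Finset (Cell m)) = 1 := by
  rw [f]
  simp

lemma f_eq {S : Finset (Cell m)} (h : S ≠ ∅) :
    f S = ∑ c ∈ Rem m S, f (S.erase c) := by
  rw [f]
  rw [if_neg h]
  exact Finset.sum_attach (Rem m S) (fun c => f (S.erase c))

lemma mem_Rem_insert {S : Finset (Cell m)} (hS : Dg m S) {a : Cell m} (ha : a ∉ S) :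
    a ∈ Rem m (insert a S) := by
  rw [mem_Rem, Finset.erase_insert ha]
  exact ⟨Finset.mem_insert_self _ _, hS⟩

/-- first exchange: if `insert a (S.erase c)` is a diagram then so is `S.erase c` -/
lemma exch1 {S : Finset (Cell m)} (hS : Dg m S) {a c : Cell m} (ha : a ∉ S) (hc : c ∈ S)
    (hdg : Dg m (insert a (S.erase c))) : Dg m (S.erase c) := by
  rintro k' r' s' hd r'' hr'' s'' hs''
  obtain ⟨hne, hdS⟩ := Finset.mem_erase.mp hd
  refine Finset.mem_erase.mpr ⟨?_, hS k' r' s' hdS r'' hr'' s'' hs''⟩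
  intro heq
  have h1 : (k', r', s') ∈ insert a (S.erase c) := Finset.mem_insert_of_mem hd
  have h2 := hdg k' r' s' h1 r'' hr'' s'' hs''
  rcases Finset.mem_insert.mp h2 with h3 | h3
  · rw [heq] at h3
    exact ha (h3 ▸ hc)
  · rw [heq] at h3
    exact (Finset.mem_erase.mp h3).1 rfl

/-- second exchange: if `insert a (S.erase c)` is a diagram then so is `insert a S` -/
lemma exch2 {S : Finset (Cell m)} (hS : Dg m S) {a c : Cell m} (hc : c ∈ S)
    (hdg : Dg m (insert a (S.erase c))) : Dg m (insert a S) := by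
  rintro k' r' s' hd r'' hr'' s'' hs''
  rcases Finset.mem_insert.mp hd with h1 | h1
  · -- the cell is a itself
    subst h1
    by_cases hec : ((k', r'', s'') : Cell m) = c
    · exact Finset.mem_insert_of_mem (hec ▸ hc)
    · have h2 := hdg k' r' s' (Finset.mem_insert_self _ _) r'' hr'' s'' hs''
      rcases Finset.mem_insert.mp h2 with h3 | h3
      · rw [h3]
        exact Finset.mem_insert_self _ _
      · exact Finset.mem_insert_of_mem (Finset.mem_of_mem_erase h3)
  · exact Finset.mem_insert_of_mem (hS k' r' s' h1 r'' hr'' s'' hs'')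

/-- the exchange bijection on index pairs -/
lemma pair_iff {S : Finset (Cell m)} (hS : Dg m S) (a c : Cell m) :
    (a ∈ AddF m S ∧ c ∈ (Rem m (insert a S)).erase a) ↔
    (c ∈ Rem m S ∧ a ∈ (AddF m (S.erase c)).erase c) := by
  constructor
  · rintro ⟨h1, h2⟩
    obtain ⟨ha, hdgi⟩ := (mem_AddF hS).mp h1
    obtain ⟨hca, h3⟩ := Finset.mem_erase.mp h2
    obtain ⟨hcmem, hdge⟩ := mem_Rem.mp h3
    have hcS : c ∈ S := by
      rcases Finset.mem_insert.mp hcmem with h | h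
      · exact absurd h hca
      · exact h
    rw [Finset.erase_insert_of_ne (fun h => hca h.symm)] at hdge
    have hdgc : Dg m (S.erase c) := exch1 hS ha hcS hdge
    have hac : a ≠ c := fun h => ha (h ▸ hcS)
    refine ⟨mem_Rem.mpr ⟨hcS, hdgc⟩, Finset.mem_erase.mpr ⟨hac, ?_⟩⟩
    rw [mem_AddF hdgc]
    exact ⟨fun h => ha (Finset.mem_of_mem_erase h), hdge⟩
  · rintro ⟨h1, h2⟩
    obtain ⟨hcS, hdgc⟩ := mem_Rem.mp h1
    obtain ⟨hac, h3⟩ := Finset.mem_erase.mp h2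
    obtain ⟨ha', hdge⟩ := (mem_AddF hdgc).mp h3
    have haS : a ∉ S := by
      intro h
      exact ha' (Finset.mem_erase.mpr ⟨hac, h⟩)
    have hdgi : Dg m (insert a S) := exch2 hS hcS hdge
    refine ⟨(mem_AddF hS).mpr ⟨haS, hdgi⟩, Finset.mem_erase.mpr ⟨fun h => hac h.symm, ?_⟩⟩
    rw [mem_Rem]
    constructor
    · exact Finset.mem_insert_of_mem hcS
    · rw [Finset.erase_insert_of_ne hac]
      exact hdge

/-- key lemma: summing `f` over all covers of a diagram -/
lemma sum_addf : ∀ (n : ℕ) (S : Finset (Cell m)), S.card = n → Dg m S →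
    ∑ a ∈ AddF m S, f (insert a S) = m * (n + 1) * f S := by
  intro n
  induction n using Nat.strong_induction_on with
  | _ n ih =>
    intro S hcard hS
    rcases Nat.eq_zero_or_pos n with hn | hn
    · -- S = ∅
      subst hn
      have hSe : S = ∅ := Finset.card_eq_zero.mp hcard
      subst hSe
      have h1 : ∀ a ∈ AddF m (∅ : Finset (Cell m)), f (insert a ∅) = 1 := by
        intro a ha
        obtain ⟨ha1, ha2⟩ := (mem_AddF Dg_empty).mp ha
        have hrem : Rem m ({a} : Finset (Cell m)) = {a} := by
          ext c
          rw [mem_Rem]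
          simp only [Finset.mem_singleton]
          constructor
          · rintro ⟨h, _⟩; exact h
          · rintro rfl
            refine ⟨rfl, ?_⟩
            rw [Finset.erase_singleton]
            exact Dg_empty
        rw [show insert a (∅ : Finset (Cell m)) = {a} from rfl, f_eq (by simp), hrem,
          Finset.sum_singleton, Finset.erase_singleton, f_empty]
      rw [Finset.sum_congr rfl h1, Finset.sum_const, smul_eq_mul, mul_one,
        card_AddF Dg_empty, f_empty]
      have : Rem m (∅ : Finset (Cell m)) = ∅ := by
        simp [Rem]
      rw [this]
      simp
    · -- main case
      have hSne : S ≠ ∅ := by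
        intro h
        rw [h] at hcard
        simp at hcard
        omega
      -- unfold f on each insert a S
      have hstep : ∀ a ∈ AddF m S,
          f (insert a S) = f S + ∑ c ∈ (Rem m (insert a S)).erase a, f (insert a (S.erase c)) := by
        intro a ha
        obtain ⟨ha1, ha2⟩ := (mem_AddF hS).mp ha
        rw [f_eq (by simp [Finset.insert_ne_empty])]
        rw [← Finset.add_sum_erase _ _ (mem_Rem_insert hS ha1)]
        congr 1
        · rw [Finset.erase_insert ha1]
        · apply Finset.sum_congr rfl
          intro c hc
          congr 1
          exact Finset.erase_insert_of_ne (fun h => (Finset.mem_erase.mp hc).1 h.symm) ▸ rfl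
      rw [Finset.sum_congr rfl hstep, Finset.sum_add_distrib, Finset.sum_const, smul_eq_mul]
      -- swap the double sum
      have hswap : ∑ a ∈ AddF m S, ∑ c ∈ (Rem m (insert a S)).erase a, f (insert a (S.erase c))
          = ∑ c ∈ Rem m S, ∑ a ∈ (AddF m (S.erase c)).erase c, f (insert a (S.erase c)) := by
        rw [Finset.sum_sigma', Finset.sum_sigma']
        apply Finset.sum_nbij' (i := fun p => ⟨p.2, p.1⟩) (j := fun p => ⟨p.2, p.1⟩)
        · rintro ⟨a, c⟩ hp
          rw [Finset.mem_sigma] at hp ⊢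
          exact (pair_iff hS a c).mp ⟨hp.1, hp.2⟩
        · rintro ⟨c, a⟩ hp
          rw [Finset.mem_sigma] at hp ⊢
          exact (pair_iff hS a c).mpr ⟨hp.1, hp.2⟩
        · rintro ⟨a, c⟩ _
          rfl
        · rintro ⟨c, a⟩ _
          rfl
        · rintro ⟨a, c⟩ _
          rfl
      rw [hswap]
      have htot : (∑ c ∈ Rem m S, ∑ a ∈ (AddF m (S.erase c)).erase c, f (insert a (S.erase c)))
          + (Rem m S).card * f S = m * n * f S := by
        rw [← smul_eq_mul, ← Finset.sum_const, ← Finset.sum_add_distrib]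
        have hper : ∀ c ∈ Rem m S,
            (∑ a ∈ (AddF m (S.erase c)).erase c, f (insert a (S.erase c))) + f S
              = m * n * f (S.erase c) := by
          intro c hc
          obtain ⟨hcS, hdgc⟩ := mem_Rem.mp hc
          have hcA : c ∈ AddF m (S.erase c) := by
            rw [mem_AddF hdgc]
            refine ⟨Finset.notMem_erase c S, ?_⟩
            rw [Finset.insert_erase hcS]
            exact hS
          have h4 := Finset.add_sum_erase _ (fun a => f (insert a (S.erase c))) hcA
          simp only [Finset.insert_erase hcS] at h4
          have hcard' : (S.erase c).card = n - 1 := by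
            rw [Finset.card_erase_of_mem hcS, hcard]
          have hIH := ih (n - 1) (by omega) (S.erase c) hcard' hdgc
          rw [show n - 1 + 1 = n by omega] at hIH
          rw [add_comm, h4, hIH]
        rw [Finset.sum_congr rfl hper, ← Finset.mul_sum, ← f_eq hSne]
      have hR := card_AddF hS
      apply Nat.add_right_cancel (m := (Rem m S).card * f S)
      calc (AddF m S).card * f S
            + (∑ c ∈ Rem m S, ∑ a ∈ (AddF m (S.erase c)).erase c, f (insert a (S.erase c)))
            + (Rem m S).card * f S
          = (m + (Rem m S).card) * f S
            + ((∑ c ∈ Rem m S, ∑ a ∈ (AddF m (S.erase c)).erase c, f (insert a (S.erase c)))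
              + (Rem m S).card * f S) := by rw [hR]; ring
        _ = (m + (Rem m S).card) * f S + m * n * f S := by rw [htot]
        _ = m * (n + 1) * f S + (Rem m S).card * f S := by ring

variable (m) in
/-- all `m`-diagrams with `n` cells (in the `n × n` box, where they all live) -/
noncomputable def Dset (n : ℕ) : Finset (Finset (Cell m)) :=
  ((Finset.univ ×ˢ Finset.range n ×ˢ Finset.range n : Finset (Cell m)).powerset).filter
    (fun S => Dg m S ∧ S.card = n)

lemma mem_Dset {n : ℕ} {S : Finset (Cell m)} :
    S ∈ Dset m n ↔ Dg m S ∧ S.card = n := by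
  constructor
  · intro h
    exact (Finset.mem_filter.mp h).2
  · rintro ⟨h1, h2⟩
    refine Finset.mem_filter.mpr ⟨Finset.mem_powerset.mpr ?_, h1, h2⟩
    rintro ⟨k, r, s⟩ hc
    have := coord_lt h1 hc
    simp only [Finset.mem_product, Finset.mem_univ, Finset.mem_range]
    exact ⟨trivial, by omega, by omega⟩

theorem sum_f_sq (n : ℕ) : ∑ S ∈ Dset m n, f S ^ 2 = n.factorial * m ^ n := by
  induction n with
  | zero =>
    have h : Dset m 0 = {∅} := by
      ext S
      rw [mem_Dset, Finset.mem_singleton, Finset.card_eq_zero]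
      constructor
      · rintro ⟨_, h⟩; exact h
      · rintro rfl; exact ⟨Dg_empty, rfl⟩
    rw [h, Finset.sum_singleton, f_empty]
    simp
  | succ n ihn =>
    have hexp : ∀ S ∈ Dset m (n + 1), f S ^ 2 = ∑ c ∈ Rem m S, f S * f (S.erase c) := by
      intro S hS
      obtain ⟨hdg, hcard⟩ := mem_Dset.mp hS
      have hne : S ≠ ∅ := by
        intro h; rw [h] at hcard; simp at hcard
      rw [pow_two]
      nth_rewrite 2 [f_eq hne]
      rw [Finset.mul_sum]
    rw [Finset.sum_congr rfl hexp]
    have hswap : ∑ S ∈ Dset m (n + 1), ∑ c ∈ Rem m S, f S * f (S.erase c)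
        = ∑ μ ∈ Dset m n, ∑ a ∈ AddF m μ, f (insert a μ) * f μ := by
      rw [Finset.sum_sigma', Finset.sum_sigma']
      apply Finset.sum_nbij' (i := fun p => ⟨p.1.erase p.2, p.2⟩)
        (j := fun p => ⟨insert p.2 p.1, p.2⟩)
      · rintro ⟨S, c⟩ hp
        rw [Finset.mem_sigma] at hp ⊢
        obtain ⟨hS, hc⟩ := hp
        obtain ⟨hdg, hcard⟩ := mem_Dset.mp hS
        obtain ⟨hcS, hdgc⟩ := mem_Rem.mp hc
        constructor
        · rw [mem_Dset]
          exact ⟨hdgc, by rw [Finset.card_erase_of_mem hcS, hcard]; omega⟩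
        · rw [mem_AddF hdgc]
          refine ⟨Finset.notMem_erase _ _, ?_⟩
          rw [Finset.insert_erase hcS]
          exact hdg
      · rintro ⟨μ, a⟩ hp
        rw [Finset.mem_sigma] at hp ⊢
        obtain ⟨hμ, ha⟩ := hp
        obtain ⟨hdg, hcard⟩ := mem_Dset.mp hμ
        obtain ⟨haμ, hdgi⟩ := (mem_AddF hdg).mp ha
        constructor
        · rw [mem_Dset]
          exact ⟨hdgi, by rw [Finset.card_insert_of_notMem haμ, hcard]⟩
        · exact mem_Rem_insert hdg haμ
      · rintro ⟨S, c⟩ hp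
        rw [Finset.mem_sigma] at hp
        have hcS : c ∈ S := (mem_Rem.mp hp.2).1
        simp only [Finset.insert_erase hcS]
      · rintro ⟨μ, a⟩ hp
        rw [Finset.mem_sigma] at hp
        have hdg := (mem_Dset.mp hp.1).1
        have haμ : a ∉ μ := ((mem_AddF hdg).mp hp.2).1
        simp only [Finset.erase_insert haμ]
      · rintro ⟨S, c⟩ hp
        rw [Finset.mem_sigma] at hp
        have hcS : c ∈ S := (mem_Rem.mp hp.2).1
        simp only [Finset.insert_erase hcS]
    rw [hswap]
    have hper : ∀ μ ∈ Dset m n, ∑ a ∈ AddF m μ, f (insert a μ) * f μ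
        = m * (n + 1) * f μ ^ 2 := by
      intro μ hμ
      obtain ⟨hdg, hcard⟩ := mem_Dset.mp hμ
      rw [← Finset.sum_mul, sum_addf n μ hcard hdg]
      ring
    rw [Finset.sum_congr rfl hper, ← Finset.mul_sum, ihn, Nat.factorial_succ]
    ring

variable (m) in
/-- standard tableau with `ℕ` coordinates -/
def StdN (k : ℕ) (T : Fin k → Cell m) : Prop :=
  Function.Injective T ∧
  ∀ i : Fin k,
    (∀ s' < (T i).2.2, ∃ j : Fin k, j < i ∧ T j = ((T i).1, (T i).2.1, s')) ∧
    (∀ r' < (T i).2.1, ∃ j : Fin k, j < i ∧ T j = ((T i).1, r', (T i).2.2))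

/-- rectangle lemma: every cell weakly below-left of a cell of a standard tableau is
occupied by a weakly smaller entry. -/
lemma rect {k : ℕ} {T : Fin k → Cell m} (h : StdN m k T) :
    ∀ i : Fin k, ∀ r' s', r' ≤ (T i).2.1 → s' ≤ (T i).2.2 →
      ∃ j, j ≤ i ∧ T j = ((T i).1, r', s') := by
  have main : ∀ N, ∀ i : Fin k, (i : ℕ) < N → ∀ r' s', r' ≤ (T i).2.1 → s' ≤ (T i).2.2 →
      ∃ j, j ≤ i ∧ T j = ((T i).1, r', s') := by
    intro N
    induction N with
    | zero => intro i hi; omega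
    | succ N ihN =>
      intro i hi r' s' hr hs
      rcases Nat.lt_or_ge s' (T i).2.2 with hlt | hge
      · obtain ⟨j₁, hj₁, hTj₁⟩ := (h.2 i).1 s' hlt
        have h1 : (T j₁).1 = (T i).1 := by rw [hTj₁]
        have h2 : (T j₁).2.1 = (T i).2.1 := by rw [hTj₁]
        have h3 : (T j₁).2.2 = s' := by rw [hTj₁]
        have hj₁N : (j₁ : ℕ) < N := by
          have := Fin.lt_def.mp hj₁
          omega
        obtain ⟨j, hj, hTj⟩ := ihN j₁ hj₁N r' s' (by omega) (by omega)
        exact ⟨j, le_trans hj (le_of_lt hj₁), by rw [hTj, h1]⟩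
      · have hseq : s' = (T i).2.2 := by omega
        subst hseq
        rcases Nat.lt_or_ge r' (T i).2.1 with hlt2 | hge2
        · obtain ⟨j₁, hj₁, hTj₁⟩ := (h.2 i).2 r' hlt2
          have h1 : (T j₁).1 = (T i).1 := by rw [hTj₁]
          have h2 : (T j₁).2.1 = r' := by rw [hTj₁]
          have h3 : (T j₁).2.2 = (T i).2.2 := by rw [hTj₁]
          have hj₁N : (j₁ : ℕ) < N := by
            have := Fin.lt_def.mp hj₁
            omega
          obtain ⟨j, hj, hTj⟩ := ihN j₁ hj₁N r' (T i).2.2 (by omega) (by omega)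
          exact ⟨j, le_trans hj (le_of_lt hj₁), by rw [hTj, h1]⟩
        · have hr2 : r' = (T i).2.1 := by omega
          subst hr2
          exact ⟨i, le_rfl, by simp⟩
  exact fun i => main ((i : ℕ) + 1) i (by omega)

lemma tab_finite {k : ℕ} (S : Finset (Cell m)) :
    Finite {T : Fin k → Cell m // StdN m k T ∧ Finset.image T Finset.univ = S} := by
  let Φ : {T : Fin k → Cell m // StdN m k T ∧ Finset.image T Finset.univ = S} →
      (Fin k → {x // x ∈ S}) := fun T i =>
    ⟨T.1 i, by
      have h := Finset.mem_image_of_mem T.1 (Finset.mem_univ i)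
      rwa [T.2.2] at h⟩
  have hΦ : Function.Injective Φ := by
    intro T₁ T₂ h
    apply Subtype.ext
    funext i
    have := congrFun h i
    exact congrArg Subtype.val this
  exact Finite.of_injective Φ hΦ

lemma my_card_sigma {ι : Type*} [Fintype ι] (β : ι → Type*) [hβ : ∀ i, Finite (β i)] :
    Nat.card (Σ i, β i) = ∑ i, Nat.card (β i) := by
  letI : ∀ i, Fintype (β i) := fun i => Fintype.ofFinite _
  rw [Nat.card_eq_fintype_card]
  rw [Fintype.card_sigma]
  exact Finset.sum_congr rfl fun i _ => (Nat.card_eq_fintype_card).symm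

lemma stdn_restrict {n : ℕ} {T : Fin (n + 1) → Cell m} (h : StdN m (n + 1) T) :
    StdN m n (fun i => T i.castSucc) := by
  constructor
  · intro a b hab
    exact Fin.castSucc_injective n (h.1 hab)
  · intro i
    constructor
    · intro s' hs'
      obtain ⟨j, hj, hTj⟩ := (h.2 i.castSucc).1 s' hs'
      have hjn : (j : ℕ) < n := by
        have h1 := Fin.lt_def.mp hj
        have h2 := i.2
        simp only [Fin.coe_castSucc] at h1
        omega
      refine ⟨⟨j.val, hjn⟩, Fin.lt_def.mpr ?_, ?_⟩
      · have h1 := Fin.lt_def.mp hj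
        simpa using h1
      · have hcast : (⟨j.val, hjn⟩ : Fin n).castSucc = j := by
          ext; simp
        show T (⟨j.val, hjn⟩ : Fin n).castSucc = _
        rw [hcast, hTj]
    · intro r' hr'
      obtain ⟨j, hj, hTj⟩ := (h.2 i.castSucc).2 r' hr'
      have hjn : (j : ℕ) < n := by
        have h1 := Fin.lt_def.mp hj
        have h2 := i.2
        simp only [Fin.coe_castSucc] at h1
        omega
      refine ⟨⟨j.val, hjn⟩, Fin.lt_def.mpr ?_, ?_⟩
      · have h1 := Fin.lt_def.mp hj
        simpa using h1
      · have hcast : (⟨j.val, hjn⟩ : Fin n).castSucc = j := by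
          ext; simp
        show T (⟨j.val, hjn⟩ : Fin n).castSucc = _
        rw [hcast, hTj]

lemma image_restrict {n : ℕ} {T : Fin (n + 1) → Cell m} (hinj : Function.Injective T)
    {S : Finset (Cell m)} (himg : Finset.image T Finset.univ = S) :
    Finset.image (fun i : Fin n => T i.castSucc) Finset.univ = S.erase (T (Fin.last n)) := by
  ext x
  simp only [Finset.mem_image, Finset.mem_univ, true_and, Finset.mem_erase]
  constructor
  · rintro ⟨i, rfl⟩
    constructor
    · intro hx
      have h1 := hinj hx
      have h2 : (i : ℕ) = n := by
        have := congrArg Fin.val h1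
        simpa using this
      have := i.2
      omega
    · rw [← himg]
      exact Finset.mem_image_of_mem _ (Finset.mem_univ _)
  · rintro ⟨hne, hxS⟩
    rw [← himg] at hxS
    obtain ⟨j, _, rfl⟩ := Finset.mem_image.mp hxS
    have hjv : (j : ℕ) < n := by
      have h2 := j.2
      rcases Nat.lt_or_ge (j : ℕ) n with h | h
      · exact h
      · exfalso
        apply hne
        have hj : j = Fin.last n := by
          ext
          simp only [Fin.val_last]
          omega
        rw [hj]
    have hcast : (⟨j.val, hjv⟩ : Fin n).castSucc = j := by ext; simp
    exact ⟨⟨j.val, hjv⟩, by show T (⟨j.val, hjv⟩ : Fin n).castSucc = T j; rw [hcast]⟩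

lemma last_removable {n : ℕ} {T : Fin (n + 1) → Cell m} (h : StdN m (n + 1) T)
    {S : Finset (Cell m)} (himg : Finset.image T Finset.univ = S) :
    T (Fin.last n) ∈ Rem m S := by
  have hmemS : T (Fin.last n) ∈ S := by
    rw [← himg]; exact Finset.mem_image_of_mem _ (Finset.mem_univ _)
  refine mem_Rem.mpr ⟨hmemS, ?_⟩
  have himg' := image_restrict h.1 himg
  intro k r s hmem r' hr' s' hs'
  rw [← himg'] at hmem
  obtain ⟨i, _, hTi⟩ := Finset.mem_image.mp hmem
  have hk : (T i.castSucc).1 = k := by rw [hTi]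
  have hr : (T i.castSucc).2.1 = r := by rw [hTi]
  have hs : (T i.castSucc).2.2 = s := by rw [hTi]
  obtain ⟨j, hj, hTj⟩ := rect h i.castSucc r' s' (by omega) (by omega)
  have hjn : (j : ℕ) < n := by
    have h1 := Fin.le_def.mp hj
    have h2 := i.2
    simp only [Fin.coe_castSucc] at h1
    omega
  rw [← himg']
  refine Finset.mem_image.mpr ⟨⟨j.val, hjn⟩, Finset.mem_univ _, ?_⟩
  have hcast : (⟨j.val, hjn⟩ : Fin n).castSucc = j := by ext; simp
  rw [hcast, hTj, hk]

lemma image_snoc {n : ℕ} {T' : Fin n → Cell m} {S : Finset (Cell m)} {c : Cell m}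
    (hcS : c ∈ S) (himg' : Finset.image T' Finset.univ = S.erase c) :
    Finset.image (Fin.snoc T' c : Fin (n + 1) → Cell m) Finset.univ = S := by
  ext x
  simp only [Finset.mem_image, Finset.mem_univ, true_and]
  constructor
  · rintro ⟨i, rfl⟩
    rcases Fin.eq_castSucc_or_eq_last i with ⟨i₀, rfl⟩ | rfl
    · rw [Fin.snoc_castSucc]
      have : T' i₀ ∈ S.erase c := by
        rw [← himg']; exact Finset.mem_image_of_mem _ (Finset.mem_univ _)
      exact Finset.mem_of_mem_erase this
    · rw [Fin.snoc_last]; exact hcS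
  · intro hx
    by_cases hxc : x = c
    · exact ⟨Fin.last n, by rw [Fin.snoc_last, hxc]⟩
    · have : x ∈ S.erase c := Finset.mem_erase.mpr ⟨hxc, hx⟩
      rw [← himg'] at this
      obtain ⟨i₀, _, rfl⟩ := Finset.mem_image.mp this
      exact ⟨i₀.castSucc, by rw [Fin.snoc_castSucc]⟩

lemma stdn_snoc {n : ℕ} {T' : Fin n → Cell m} (h : StdN m n T') {S : Finset (Cell m)}
    (hS : Dg m S) {c : Cell m} (hc : c ∈ Rem m S)
    (himg' : Finset.image T' Finset.univ = S.erase c) :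
    StdN m (n + 1) (Fin.snoc T' c) := by
  obtain ⟨hcS, _⟩ := mem_Rem.mp hc
  have hcnot : ∀ i₀ : Fin n, T' i₀ ≠ c := by
    intro i₀ heq
    have : T' i₀ ∈ S.erase c := by
      rw [← himg']; exact Finset.mem_image_of_mem _ (Finset.mem_univ _)
    exact (Finset.mem_erase.mp this).1 heq
  constructor
  · intro a b hab
    rcases Fin.eq_castSucc_or_eq_last a with ⟨a₀, rfl⟩ | rfl <;>
      rcases Fin.eq_castSucc_or_eq_last b with ⟨b₀, rfl⟩ | rfl
    · rw [Fin.snoc_castSucc, Fin.snoc_castSucc] at hab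
      rw [h.1 hab]
    · rw [Fin.snoc_castSucc, Fin.snoc_last] at hab
      exact absurd hab (hcnot a₀)
    · rw [Fin.snoc_last, Fin.snoc_castSucc] at hab
      exact absurd hab.symm (hcnot b₀)
    · rfl
  · intro i
    rcases Fin.eq_castSucc_or_eq_last i with ⟨i₀, rfl⟩ | rfl
    · simp only [Fin.snoc_castSucc]
      constructor
      · intro s' hs'
        obtain ⟨j₀, hj₀, hTj₀⟩ := (h.2 i₀).1 s' hs'
        exact ⟨j₀.castSucc, by
          constructor
          · exact Fin.castSucc_lt_castSucc_iff.mpr hj₀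
          · rw [Fin.snoc_castSucc, hTj₀]⟩
      · intro r' hr'
        obtain ⟨j₀, hj₀, hTj₀⟩ := (h.2 i₀).2 r' hr'
        exact ⟨j₀.castSucc, by
          constructor
          · exact Fin.castSucc_lt_castSucc_iff.mpr hj₀
          · rw [Fin.snoc_castSucc, hTj₀]⟩
    · simp only [Fin.snoc_last]
      obtain ⟨k, r, s⟩ := c
      constructor
      · intro s' hs'
        have hs2 : s' < s := hs'
        have hmem : ((k, r, s') : Cell m) ∈ S.erase (k, r, s) := by
          refine Finset.mem_erase.mpr ⟨?_, hS k r s hcS r le_rfl s' (le_of_lt hs2)⟩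
          intro heq
          have hss : s' = s := congrArg (fun x => x.2.2) heq
          omega
        rw [← himg'] at hmem
        obtain ⟨j₀, _, hTj₀⟩ := Finset.mem_image.mp hmem
        exact ⟨j₀.castSucc, Fin.castSucc_lt_last j₀, by rw [Fin.snoc_castSucc, hTj₀]⟩
      · intro r' hr'
        have hr2 : r' < r := hr'
        have hmem : ((k, r', s) : Cell m) ∈ S.erase (k, r, s) := by
          refine Finset.mem_erase.mpr ⟨?_, hS k r s hcS r' (le_of_lt hr2) s le_rfl⟩
          intro heq
          have hrr : r' = r := congrArg (fun x => x.2.1) heq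
          omega
        rw [← himg'] at hmem
        obtain ⟨j₀, _, hTj₀⟩ := Finset.mem_image.mp hmem
        exact ⟨j₀.castSucc, Fin.castSucc_lt_last j₀, by rw [Fin.snoc_castSucc, hTj₀]⟩

/-- the number of standard tableaux of shape `S` equals `f S` -/
lemma card_tab : ∀ (k : ℕ) (S : Finset (Cell m)), Dg m S → S.card = k →
    Nat.card {T : Fin k → Cell m // StdN m k T ∧ Finset.image T Finset.univ = S} = f S := by
  intro k
  induction k with
  | zero =>
    intro S _ hcard
    have hSe : S = ∅ := Finset.card_eq_zero.mp hcard
    subst hSe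
    haveI : Unique {T : Fin 0 → Cell m // StdN m 0 T ∧ Finset.image T Finset.univ = ∅} :=
      { default := ⟨fun i => i.elim0,
          ⟨fun a => a.elim0, fun i => i.elim0⟩, by simp⟩
        uniq := fun T => Subtype.ext (funext fun i => i.elim0) }
    rw [Nat.card_unique, f_empty]
  | succ n ih =>
    intro S hS hcard
    have hne : S ≠ ∅ := by
      intro h; rw [h] at hcard; simp at hcard
    haveI : ∀ c : {c // c ∈ Rem m S},
        Finite {T' : Fin n → Cell m // StdN m n T' ∧ Finset.image T' Finset.univ = S.erase c.1} :=
      fun c => tab_finite _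
    have E : {T : Fin (n + 1) → Cell m // StdN m (n + 1) T ∧ Finset.image T Finset.univ = S} ≃
        Σ c : {c // c ∈ Rem m S},
          {T' : Fin n → Cell m // StdN m n T' ∧ Finset.image T' Finset.univ = S.erase c.1} :=
      { toFun := fun T => ⟨⟨T.1 (Fin.last n), last_removable T.2.1 T.2.2⟩,
          ⟨fun i => T.1 i.castSucc, stdn_restrict T.2.1, image_restrict T.2.1.1 T.2.2⟩⟩
        invFun := fun p => ⟨Fin.snoc p.2.1 p.1.1,
          stdn_snoc p.2.2.1 hS p.1.2 p.2.2.2,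
          image_snoc (mem_Rem.mp p.1.2).1 p.2.2.2⟩
        left_inv := fun T => Subtype.ext (funext fun i => by
          rcases Fin.eq_castSucc_or_eq_last i with ⟨i₀, rfl⟩ | rfl
          · simp
          · simp)
        right_inv := fun p => by
          obtain ⟨⟨c, hc⟩, ⟨T', h1, h2⟩⟩ := p
          apply Sigma.subtype_ext
          · apply Subtype.ext
            simp
          · funext i
            simp }
    rw [Nat.card_congr E, my_card_sigma]
    rw [f_eq hne]
    have hsum : ∑ c : {c // c ∈ Rem m S},
        Nat.card {T' : Fin n → Cell m // StdN m n T' ∧ Finset.image T' Finset.univ = S.erase c.1}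
        = ∑ c ∈ (Rem m S).attach,
            Nat.card {T' : Fin n → Cell m //
              StdN m n T' ∧ Finset.image T' Finset.univ = S.erase c.1} := rfl
    rw [hsum]
    rw [Finset.sum_attach (Rem m S)
      (fun c => Nat.card {T' : Fin n → Cell m //
        StdN m n T' ∧ Finset.image T' Finset.univ = S.erase c})]
    apply Finset.sum_congr rfl
    intro c hc
    obtain ⟨hcS, hdgc⟩ := mem_Rem.mp hc
    exact ih (S.erase c) hdgc (by rw [Finset.card_erase_of_mem hcS, hcard]; omega)

end YD

namespace YD

open scoped Classical

variable {m n : ℕ}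

/-- the embedding from bounded to unbounded coordinates -/
def emb (m n : ℕ) : Fin m × Fin n × Fin n → Cell m := fun c => (c.1, c.2.1.val, c.2.2.val)

lemma emb_inj : Function.Injective (emb m n) := by
  rintro ⟨k, r, s⟩ ⟨k', r', s'⟩ h
  obtain ⟨h1, h2, h3⟩ : k = k' ∧ (r : ℕ) = (r' : ℕ) ∧ (s : ℕ) = (s' : ℕ) := by
    simpa [emb, Prod.ext_iff] using h
  simp [Prod.ext_iff, Fin.ext_iff, h1, h2, h3]

lemma stdn_of_stdtab {T : Fin n → Fin m × Fin n × Fin n} (hT : IsStdTab m n T) :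
    StdN m n (emb m n ∘ T) := by
  constructor
  · exact emb_inj.comp hT.1
  · intro i
    constructor
    · intro s' hs'
      have hs'2 : s' < ((T i).2.2 : ℕ) := hs'
      have hn : s' < n := by
        have := (T i).2.2.isLt
        omega
      obtain ⟨j, hj, hTj⟩ := (hT.2 i).1 ⟨s', hn⟩ (by rw [Fin.lt_def]; exact hs'2)
      exact ⟨j, hj, by show emb m n (T j) = _; rw [hTj]; rfl⟩
    · intro r' hr'
      have hr'2 : r' < ((T i).2.1 : ℕ) := hr'
      have hn : r' < n := by
        have := (T i).2.1.isLt
        omega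
      obtain ⟨j, hj, hTj⟩ := (hT.2 i).2 ⟨r', hn⟩ (by rw [Fin.lt_def]; exact hr'2)
      exact ⟨j, hj, by show emb m n (T j) = _; rw [hTj]; rfl⟩

lemma transfer_card (S : Finset (Fin m × Fin n × Fin n)) :
    Nat.card {T : Fin n → Fin m × Fin n × Fin n //
        IsStdTab m n T ∧ Finset.image T Finset.univ = S}
    = Nat.card {T' : Fin n → Cell m //
        StdN m n T' ∧ Finset.image T' Finset.univ = S.image (emb m n)} := by
  apply Nat.card_eq_of_bijective
    (f := fun T => ⟨emb m n ∘ T.1, stdn_of_stdtab T.2.1,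
      by rw [← Finset.image_image, T.2.2]⟩)
  constructor
  · intro T₁ T₂ h
    apply Subtype.ext
    have h2 : emb m n ∘ T₁.1 = emb m n ∘ T₂.1 := congrArg Subtype.val h
    funext i
    exact emb_inj (congrFun h2 i)
  · rintro ⟨T', h1, h2⟩
    have hb : ∀ i, (T' i).2.1 < n ∧ (T' i).2.2 < n := by
      intro i
      have hmem : T' i ∈ S.image (emb m n) := by
        rw [← h2]; exact Finset.mem_image_of_mem _ (Finset.mem_univ i)
      obtain ⟨c, _, hc⟩ := Finset.mem_image.mp hmem
      constructor
      · rw [← hc]; exact c.2.1.isLt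
      · rw [← hc]; exact c.2.2.isLt
    set T : Fin n → Fin m × Fin n × Fin n :=
      fun i => ((T' i).1, ⟨(T' i).2.1, (hb i).1⟩, ⟨(T' i).2.2, (hb i).2⟩) with hTdef
    have hembT : emb m n ∘ T = T' := funext fun i => rfl
    have hstdT : IsStdTab m n T := by
      constructor
      · intro a b hab
        apply h1.1
        rw [← hembT]
        show emb m n (T a) = emb m n (T b)
        rw [hab]
      · intro i
        constructor
        · intro s' hsf
          have hsv : (s' : ℕ) < (T' i).2.2 := Fin.lt_def.mp hsf
          obtain ⟨j, hj, hTj⟩ := (h1.2 i).1 s'.val hsv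
          refine ⟨j, hj, ?_⟩
          have e1 : (T' j).1 = (T' i).1 := by rw [hTj]
          have e2 : (T' j).2.1 = (T' i).2.1 := by rw [hTj]
          have e3 : (T' j).2.2 = s'.val := by rw [hTj]
          show ((T' j).1, (⟨(T' j).2.1, _⟩ : Fin n), (⟨(T' j).2.2, _⟩ : Fin n)) = _
          simp only [Prod.mk.injEq]
          refine ⟨e1, Fin.ext ?_, Fin.ext ?_⟩
          · exact e2
          · exact e3
        · intro r' hrf
          have hrv : (r' : ℕ) < (T' i).2.1 := Fin.lt_def.mp hrf
          obtain ⟨j, hj, hTj⟩ := (h1.2 i).2 r'.val hrv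
          refine ⟨j, hj, ?_⟩
          have e1 : (T' j).1 = (T' i).1 := by rw [hTj]
          have e2 : (T' j).2.1 = r'.val := by rw [hTj]
          have e3 : (T' j).2.2 = (T' i).2.2 := by rw [hTj]
          show ((T' j).1, (⟨(T' j).2.1, _⟩ : Fin n), (⟨(T' j).2.2, _⟩ : Fin n)) = _
          simp only [Prod.mk.injEq]
          refine ⟨e1, Fin.ext ?_, Fin.ext ?_⟩
          · exact e2
          · exact e3
    have himgT : Finset.image T Finset.univ = S := by
      apply Finset.image_injective emb_inj
      rw [Finset.image_image, hembT, h2]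
    exact ⟨⟨T, hstdT, himgT⟩, Subtype.ext hembT⟩

lemma image_emb_mem_Dset {S : Finset (Fin m × Fin n × Fin n)} (h : IsMPartition m n S) :
    S.image (emb m n) ∈ Dset m n := by
  rw [mem_Dset]
  constructor
  · intro k r s hmem r' hr' s' hs'
    obtain ⟨⟨k₀, r₀, s₀⟩, hc, hceq⟩ := Finset.mem_image.mp hmem
    have e1 : k₀ = k := congrArg Prod.fst hceq
    have e2 : (r₀ : ℕ) = r := congrArg (fun x => x.2.1) hceq
    have e3 : (s₀ : ℕ) = s := congrArg (fun x => x.2.2) hceq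
    have hr'n : r' < n := by have := r₀.isLt; omega
    have hs'n : s' < n := by have := s₀.isLt; omega
    have hmem2 := h.2 k₀ r₀ s₀ hc ⟨r', hr'n⟩ (by rw [Fin.le_def]; simp; omega)
      ⟨s', hs'n⟩ (by rw [Fin.le_def]; simp; omega)
    subst e1
    exact Finset.mem_image.mpr ⟨(k₀, ⟨r', hr'n⟩, ⟨s', hs'n⟩), hmem2, rfl⟩
  · rw [Finset.card_image_of_injective _ emb_inj]
    exact h.1

open scoped Classical in
noncomputable def down (m n : ℕ) (S' : Finset (Cell m)) : Finset (Fin m × Fin n × Fin n) :=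
  Finset.univ.filter (fun c => emb m n c ∈ S')

lemma mem_down {S' : Finset (Cell m)} {c : Fin m × Fin n × Fin n} :
    c ∈ down m n S' ↔ emb m n c ∈ S' := by
  classical
  simp [down]

lemma image_down {S' : Finset (Cell m)} (h : S' ∈ Dset m n) :
    (down m n S').image (emb m n) = S' := by
  have hsub : S' ⊆ (Finset.univ : Finset (Fin m)) ×ˢ Finset.range n ×ˢ Finset.range n :=
    Finset.mem_powerset.mp (Finset.mem_filter.mp h).1
  ext x
  constructor
  · intro hx
    obtain ⟨c, hc, rfl⟩ := Finset.mem_image.mp hx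
    exact mem_down.mp hc
  · intro hx
    obtain ⟨k, r, s⟩ := x
    have hbox := hsub hx
    simp only [Finset.mem_product, Finset.mem_range] at hbox
    refine Finset.mem_image.mpr ⟨(k, ⟨r, hbox.2.1⟩, ⟨s, hbox.2.2⟩), mem_down.mpr ?_, rfl⟩
    exact hx

lemma down_image (S : Finset (Fin m × Fin n × Fin n)) :
    down m n (S.image (emb m n)) = S := by
  ext c
  rw [mem_down]
  constructor
  · intro h
    obtain ⟨c', hc', heq⟩ := Finset.mem_image.mp h
    rwa [emb_inj heq] at hc'
  · intro h
    exact Finset.mem_image_of_mem _ h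

lemma down_mpart {S' : Finset (Cell m)} (h : S' ∈ Dset m n) :
    IsMPartition m n (down m n S') := by
  obtain ⟨hdg, hcard⟩ := mem_Dset.mp h
  constructor
  · have := image_down h
    rw [← this, Finset.card_image_of_injective _ emb_inj] at hcard
    exact hcard
  · intro k r s hmem r' hr' s' hs'
    rw [mem_down] at hmem ⊢
    exact hdg k r.val s.val hmem r'.val (Fin.le_def.mp hr') s'.val (Fin.le_def.mp hs')

end YD


open Classical in
/-- `∑_λ (#{standard m-tableaux of shape λ})² = n! · m^n`,
the sum being over all `m`-partitions `λ` of length `n`. -/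
theorem sum_sq_card_stdTab (m n : ℕ) :
    ∑ S ∈ Finset.univ.filter (fun S : Finset (Fin m × Fin n × Fin n) =>
        IsMPartition m n S),
      (Nat.card {T : Fin n → Fin m × Fin n × Fin n //
          IsStdTab m n T ∧ Finset.image T Finset.univ = S}) ^ 2 =
      n.factorial * m ^ n := by
  classical
  have hsummand : ∀ S ∈ Finset.univ.filter (fun S : Finset (Fin m × Fin n × Fin n) =>
      IsMPartition m n S),
      (Nat.card {T : Fin n → Fin m × Fin n × Fin n //
          IsStdTab m n T ∧ Finset.image T Finset.univ = S}) ^ 2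
        = YD.f (S.image (YD.emb m n)) ^ 2 := by
    intro S hS
    have hp : IsMPartition m n S := (Finset.mem_filter.mp hS).2
    have hd := YD.image_emb_mem_Dset hp
    rw [YD.transfer_card S,
      YD.card_tab n _ (YD.mem_Dset.mp hd).1 (YD.mem_Dset.mp hd).2]
  rw [Finset.sum_congr rfl hsummand]
  have hbij : ∑ S ∈ Finset.univ.filter (fun S : Finset (Fin m × Fin n × Fin n) =>
      IsMPartition m n S), YD.f (S.image (YD.emb m n)) ^ 2
      = ∑ S' ∈ YD.Dset m n, YD.f S' ^ 2 := by
    apply Finset.sum_nbij' (i := fun S => S.image (YD.emb m n)) (j := YD.down m n)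
    · intro S hS
      exact YD.image_emb_mem_Dset (Finset.mem_filter.mp hS).2
    · intro S' hS'
      exact Finset.mem_filter.mpr ⟨Finset.mem_univ _, YD.down_mpart hS'⟩
    · intro S _
      exact YD.down_image S
    · intro S' hS'
      exact YD.image_down hS'
    · intro S _
      rfl
  rw [hbij, YD.sum_f_sq]
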